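/- Let Φ and Ψ be frames for H, m a semi-normalized symbol (0 < a ≤ |m_n| ≤ b < ∞), and suppose M_{m,Φ,Ψ} is invertible on H. Define Ψ† = (M_{m,Φ,Ψ}^{-1}(m_n φ_n)). Then Ψ† is the unique sequence F in H such that M_{m,Φ,Ψ}^{-1} = M_{1/m, F, Φ^d} for every dual frame Φ^d of Φ. -/

import Mathlib

/-! Any dual frame `Φᵈ` turns the left-hand side into `M⁻¹ f = Σ (m n)⁻¹ ⟨f, Φᵈ n⟩ F n`.
If `u ∈ ℓ²` and `Σ u n • Φ n = 0`, then `Φᵈ n + conj (u n) • w` is again a dual frame, and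
subtracting the two expansions of `M⁻¹ w` (with `w ≠ 0`) gives `Σ (m n)⁻¹ u n F n = 0`.
For `u = δₖ - (⟨Φ k, Φᵈ n⟩)ₙ` this isolates `(m k)⁻¹ F k = M⁻¹ (Φ k)`.
One dual frame always exists: `(M⁻¹)* (conj (m n) • Ψ n)`, since `M M⁻¹ = id` and the adjoint of
`M_{m,Φ,Ψ}` is `M_{m̄,Ψ,Φ}`. The converse is `M⁻¹` applied to `f = Σ ⟨f, Φᵈ n⟩ Φ n`. -/

open scoped ComplexConjugate ComplexInnerProductSpace

variable {H : Type*} [NormedAddCommGroup H] [InnerProductSpace ℂ H] [CompleteSpace H]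

/-- `Φ` is a Bessel sequence in `H`. -/
def IsBessel (Φ : ℕ → H) : Prop :=
  ∃ B : ℝ, 0 < B ∧ ∀ f : H, Summable (fun n => ‖⟪Φ n, f⟫‖ ^ 2) ∧
    ∑' n, ‖⟪Φ n, f⟫‖ ^ 2 ≤ B * ‖f‖ ^ 2

/-- `Φ` is a frame for `H`. -/
def IsFrame (Φ : ℕ → H) : Prop :=
  ∃ A B : ℝ, 0 < A ∧ 0 < B ∧ ∀ f : H, Summable (fun n => ‖⟪Φ n, f⟫‖ ^ 2) ∧
    A * ‖f‖ ^ 2 ≤ ∑' n, ‖⟪Φ n, f⟫‖ ^ 2 ∧ ∑' n, ‖⟪Φ n, f⟫‖ ^ 2 ≤ B * ‖f‖ ^ 2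

/-- `F` is a dual frame of the frame `Φ`:
`f = Σ ⟨f, Φ n⟩ F n = Σ ⟨f, F n⟩ Φ n` for all `f` (paper convention `⟨f, x⟩ = ⟪x, f⟫`). -/
def IsDualFrame (Φ F : ℕ → H) : Prop :=
  IsFrame F ∧ ∀ f : H, HasSum (fun n => ⟪Φ n, f⟫ • F n) f ∧ HasSum (fun n => ⟪F n, f⟫ • Φ n) f

/-- `F` is an analysis pseudo-dual of `Φ`: `f = Σ ⟨f, F n⟩ Φ n` for all `f`. -/
def IsAPseudoDual (Φ F : ℕ → H) : Prop := ∀ f : H, HasSum (fun n => ⟪F n, f⟫ • Φ n) f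

/-- `F` is a synthesis pseudo-dual of `Φ`: `f = Σ ⟨f, Φ n⟩ F n` for all `f`. -/
def IsSPseudoDual (Φ F : ℕ → H) : Prop := ∀ f : H, HasSum (fun n => ⟪Φ n, f⟫ • F n) f

/-- The frame operator `S_Φ f = Σ ⟨f, Φ n⟩ Φ n`. -/
noncomputable def frameOp (Φ : ℕ → H) (f : H) : H := ∑' n, ⟪Φ n, f⟫ • Φ n

/-- `m` is semi-normalized: `0 < a ≤ ‖m n‖ ≤ b < ∞`. -/
def SemiNormalized (m : ℕ → ℂ) : Prop := ∃ a b : ℝ, 0 < a ∧ ∀ n, a ≤ ‖m n‖ ∧ ‖m n‖ ≤ b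

open scoped InnerProduct

lemma norm_add_sq_le_two_mul {E : Type*} [SeminormedAddCommGroup E] (x y : E) :
    ‖x + y‖ ^ 2 ≤ 2 * (‖x‖ ^ 2 + ‖y‖ ^ 2) :=
  (pow_le_pow_left₀ (norm_nonneg _) (norm_add_le x y) 2).trans add_sq_le

lemma summable_sq_norm_sub {ι E : Type*} [SeminormedAddCommGroup E] {a b : ι → E}
    (ha : Summable fun i => ‖a i‖ ^ 2) (hb : Summable fun i => ‖b i‖ ^ 2) :
    Summable fun i => ‖a i - b i‖ ^ 2 :=
  ((ha.add hb).mul_left 2).of_nonneg_of_le (fun _ => sq_nonneg _) fun i => by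
    simpa [sub_eq_add_neg] using norm_add_sq_le_two_mul (a i) (-b i)

lemma summable_mul_and_tsum_mul_le_sqrt_mul_sqrt {ι : Type*} {a b : ι → ℝ}
    (ha0 : ∀ i, 0 ≤ a i) (hb0 : ∀ i, 0 ≤ b i)
    (ha : Summable fun i => a i ^ 2) (hb : Summable fun i => b i ^ 2) :
    (Summable fun i => a i * b i) ∧ ∑' i, a i * b i ≤ √(∑' i, a i ^ 2) * √(∑' i, b i ^ 2) := by
  simpa [Real.sqrt_eq_rpow] using Real.summable_and_inner_le_Lp_mul_Lq_tsum_of_nonneg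
    Real.HolderConjugate.two_two ha0 hb0 (by simpa using ha) (by simpa using hb)

lemma sq_le_mul_of_sq_le_sqrt_mul_sqrt {x S B : ℝ} (hS : 0 ≤ S) (hB : 0 ≤ B)
    (h : x ^ 2 ≤ √S * √(B * x ^ 2)) : x ^ 2 ≤ S * B := by
  rw [Real.sqrt_mul hB, Real.sqrt_sq_eq_abs, ← sq_abs] at h
  have habs : |x| ≤ √S * √B := by
    rcases (abs_nonneg x).eq_or_lt with h0 | hpos
    · rw [← h0]
      positivity
    · exact le_of_mul_le_mul_right (by rw [mul_assoc, ← pow_two]; exact h) hpos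
  calc x ^ 2 = |x| ^ 2 := (sq_abs x).symm
    _ ≤ (√S * √B) ^ 2 := pow_le_pow_left₀ (abs_nonneg x) habs 2
    _ = S * B := by rw [mul_pow, Real.sq_sqrt hS, Real.sq_sqrt hB]

variable {E : Type*} [NormedAddCommGroup E] [InnerProductSpace ℂ E]

lemma norm_inner_self_eq_norm_sq (x : E) : ‖⟪x, x⟫‖ = ‖x‖ ^ 2 := by
  simp [inner_self_eq_norm_sq_to_K]

section Bessel

variable {Φ Ψ : ℕ → E}

lemma IsFrame.isBessel (hΦ : IsFrame Φ) : IsBessel Φ := by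
  obtain ⟨_, B, _, hB0, hB⟩ := hΦ
  exact ⟨B, hB0, fun f => ⟨(hB f).1, (hB f).2.2⟩⟩

lemma IsBessel.summable (hΦ : IsBessel Φ) (f : E) : Summable fun n => ‖⟪Φ n, f⟫‖ ^ 2 := by
  obtain ⟨_, _, hB⟩ := hΦ
  exact (hB f).1

lemma IsBessel.of_le (g : E → ℕ → ℝ) (B : ℝ) (hle : ∀ f n, ‖⟪Φ n, f⟫‖ ^ 2 ≤ g f n)
    (hg : ∀ f, Summable (g f)) (hB : ∀ f, ∑' n, g f n ≤ B * ‖f‖ ^ 2) : IsBessel Φ := by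
  refine ⟨max B 1, by positivity, fun f => ?_⟩
  have hs : Summable fun n => ‖⟪Φ n, f⟫‖ ^ 2 :=
    (hg f).of_nonneg_of_le (fun _ => sq_nonneg _) (hle f)
  refine ⟨hs, ?_⟩
  calc ∑' n, ‖⟪Φ n, f⟫‖ ^ 2 ≤ ∑' n, g f n := hs.tsum_le_tsum (hle f) (hg f)
    _ ≤ B * ‖f‖ ^ 2 := hB f
    _ ≤ max B 1 * ‖f‖ ^ 2 := by gcongr; exact le_max_left _ _

lemma IsBessel.smul (hΨ : IsBessel Ψ) {m : ℕ → ℂ} {b : ℝ} (hm : ∀ n, ‖m n‖ ≤ b) :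
    IsBessel fun n => m n • Ψ n := by
  obtain ⟨B, -, hB⟩ := hΨ
  refine .of_le (fun f n => b ^ 2 * ‖⟪Ψ n, f⟫‖ ^ 2) (b ^ 2 * B) (fun f n => ?_)
    (fun f => (hB f).1.mul_left _) (fun f => ?_)
  · rw [inner_smul_left, norm_mul, RCLike.norm_conj, mul_pow]
    gcongr
    exact hm n
  · rw [tsum_mul_left, mul_assoc]
    gcongr
    exact (hB f).2

lemma IsBessel.map [CompleteSpace E] (hΨ : IsBessel Ψ) (S : E →L[ℂ] E) :
    IsBessel fun n => S (Ψ n) := by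
  obtain ⟨B, hB0, hB⟩ := hΨ
  refine .of_le (fun f n => ‖⟪Ψ n, (S†) f⟫‖ ^ 2) (B * ‖S†‖ ^ 2)
    (fun f n => by rw [ContinuousLinearMap.adjoint_inner_right]) (fun f => (hB _).1) (fun f => ?_)
  calc ∑' n, ‖⟪Ψ n, (S†) f⟫‖ ^ 2 ≤ B * ‖(S†) f‖ ^ 2 := (hB _).2
    _ ≤ B * (‖S†‖ * ‖f‖) ^ 2 := by gcongr; exact (S†).le_opNorm f
    _ = B * ‖S†‖ ^ 2 * ‖f‖ ^ 2 := by ring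

lemma IsBessel.add (hΦ : IsBessel Φ) (hΨ : IsBessel Ψ) : IsBessel fun n => Φ n + Ψ n := by
  obtain ⟨A, -, hA⟩ := hΦ
  obtain ⟨B, -, hB⟩ := hΨ
  refine .of_le (fun f n => 2 * (‖⟪Φ n, f⟫‖ ^ 2 + ‖⟪Ψ n, f⟫‖ ^ 2)) (2 * (A + B))
    (fun f n => by rw [inner_add_left]; exact norm_add_sq_le_two_mul _ _)
    (fun f => ((hA f).1.add (hB f).1).mul_left 2) (fun f => ?_)
  rw [tsum_mul_left, (hA f).1.tsum_add (hB f).1]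
  linarith [(hA f).2, (hB f).2]

lemma isBessel_smul_const {c : ℕ → ℂ} (hc : Summable fun n => ‖c n‖ ^ 2) (w : E) :
    IsBessel fun n => c n • w :=
  .of_le (fun f n => ‖c n‖ ^ 2 * (‖w‖ * ‖f‖) ^ 2) ((∑' n, ‖c n‖ ^ 2) * ‖w‖ ^ 2)
    (fun f n => by
      rw [inner_smul_left, norm_mul, RCLike.norm_conj, mul_pow]
      gcongr
      exact norm_inner_le_norm w f)
    (fun f => hc.mul_right _) (fun f => le_of_eq (by rw [tsum_mul_right]; ring))

lemma IsBessel.exists_norm_sum_smul_sq_le (hΨ : IsBessel Ψ) :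
    ∃ B > 0, ∀ (c : ℕ → ℂ) (s : Finset ℕ),
      ‖∑ n ∈ s, c n • Ψ n‖ ^ 2 ≤ B * ∑ n ∈ s, ‖c n‖ ^ 2 := by
  obtain ⟨B, hB0, hB⟩ := hΨ
  refine ⟨B, hB0, fun c s => ?_⟩
  set g := ∑ n ∈ s, c n • Ψ n with hg
  have hgg : ⟪g, g⟫ = ∑ n ∈ s, conj (c n) * ⟪Ψ n, g⟫ := by
    nth_rw 1 [hg]
    rw [sum_inner]
    simp only [inner_smul_left]
  have hΨg : ∑ n ∈ s, ‖⟪Ψ n, g⟫‖ ^ 2 ≤ B * ‖g‖ ^ 2 :=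
    ((hB g).1.sum_le_tsum s fun _ _ => sq_nonneg _).trans (hB g).2
  rw [mul_comm]
  refine sq_le_mul_of_sq_le_sqrt_mul_sqrt (Finset.sum_nonneg fun _ _ => sq_nonneg _) hB0.le ?_
  calc ‖g‖ ^ 2 = ‖⟪g, g⟫‖ := (norm_inner_self_eq_norm_sq g).symm
    _ ≤ ∑ n ∈ s, ‖c n‖ * ‖⟪Ψ n, g⟫‖ := by
      rw [hgg]
      exact (norm_sum_le _ _).trans_eq (by simp only [norm_mul, RCLike.norm_conj])
    _ ≤ √(∑ n ∈ s, ‖c n‖ ^ 2) * √(∑ n ∈ s, ‖⟪Ψ n, g⟫‖ ^ 2) :=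
      Real.sum_mul_le_sqrt_mul_sqrt _ _ _
    _ ≤ √(∑ n ∈ s, ‖c n‖ ^ 2) * √(B * ‖g‖ ^ 2) := by gcongr

lemma IsBessel.summable_smul [CompleteSpace E] (hΨ : IsBessel Ψ) {c : ℕ → ℂ}
    (hc : Summable fun n => ‖c n‖ ^ 2) :
    Summable fun n => c n • Ψ n := by
  obtain ⟨B, hB0, hB⟩ := hΨ.exists_norm_sum_smul_sq_le
  refine summable_iff_vanishing_norm.2 fun ε hε => ?_
  obtain ⟨s, hs⟩ := summable_iff_vanishing_norm.1 hc (ε ^ 2 / B) (by positivity)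
  refine ⟨s, fun t ht => lt_of_pow_lt_pow_left₀ 2 hε.le ?_⟩
  calc ‖∑ n ∈ t, c n • Ψ n‖ ^ 2 ≤ B * ∑ n ∈ t, ‖c n‖ ^ 2 := hB c t
    _ < B * (ε ^ 2 / B) := by
      gcongr
      exact (le_abs_self _).trans_lt (hs t ht)
    _ = ε ^ 2 := by field_simp

end Bessel

section Duality

variable {Φ Φd : ℕ → E}

lemma IsAPseudoDual.isFrame (hΦ : IsBessel Φ) (hΦd : IsBessel Φd) (hd : IsAPseudoDual Φ Φd) :
    IsFrame Φd := by
  obtain ⟨A, hA0, hA⟩ := hΦ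
  obtain ⟨B, hB0, hB⟩ := hΦd
  refine ⟨A⁻¹, B, inv_pos.2 hA0, hB0, fun f => ⟨(hB f).1, ?_, (hB f).2⟩⟩
  obtain ⟨hsum, hcs⟩ := summable_mul_and_tsum_mul_le_sqrt_mul_sqrt
    (fun n => norm_nonneg ⟪Φd n, f⟫) (fun n => norm_nonneg ⟪Φ n, f⟫) (hB f).1 (hA f).1
  have hff : HasSum (fun n => ⟪Φd n, f⟫ * ⟪f, Φ n⟫) ⟪f, f⟫ := by
    simpa [inner_smul_right] using (innerSL ℂ f).hasSum (hd f)
  have hnorm : (fun n => ‖⟪Φd n, f⟫ * ⟪f, Φ n⟫‖) = fun n => ‖⟪Φd n, f⟫‖ * ‖⟪Φ n, f⟫‖ := by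
    simp only [norm_mul, norm_inner_symm f]
  rw [inv_mul_le_iff₀ hA0, mul_comm]
  refine sq_le_mul_of_sq_le_sqrt_mul_sqrt (tsum_nonneg fun _ => sq_nonneg _) hA0.le ?_
  calc ‖f‖ ^ 2 = ‖⟪f, f⟫‖ := (norm_inner_self_eq_norm_sq f).symm
    _ ≤ ∑' n, ‖⟪Φd n, f⟫‖ * ‖⟪Φ n, f⟫‖ := by
      rw [← hff.tsum_eq, ← hnorm]
      exact norm_tsum_le_tsum_norm (hnorm ▸ hsum)
    _ ≤ √(∑' n, ‖⟪Φd n, f⟫‖ ^ 2) * √(∑' n, ‖⟪Φ n, f⟫‖ ^ 2) := hcs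
    _ ≤ √(∑' n, ‖⟪Φd n, f⟫‖ ^ 2) * √(A * ‖f‖ ^ 2) := by gcongr; exact (hA f).2

lemma IsDualFrame.of_isBessel (hΦ : IsBessel Φ) (hΦd : IsBessel Φd) (hs : IsSPseudoDual Φ Φd)
    (ha : IsAPseudoDual Φ Φd) : IsDualFrame Φ Φd :=
  ⟨ha.isFrame hΦ hΦd, fun f => ⟨hs f, ha f⟩⟩

lemma IsDualFrame.isAPseudoDual (hd : IsDualFrame Φ Φd) : IsAPseudoDual Φ Φd :=
  fun f => (hd.2 f).2

end Duality

section Multiplier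

variable [CompleteSpace E] {Φ Ψ : ℕ → E} {m : ℕ → ℂ} {b : ℝ} {M : E →L[ℂ] E}

lemma hasSum_adjoint_of_hasSum_multiplier (hΦ : IsBessel Φ) (hΨ : IsBessel Ψ)
    (hm : ∀ n, ‖m n‖ ≤ b) (hM : ∀ f, HasSum (fun n => (m n * ⟪Ψ n, f⟫) • Φ n) (M f)) (f : E) :
    HasSum (fun n => (conj (m n) * ⟪Φ n, f⟫) • Ψ n) ((M†) f) := by
  have hc : Summable fun n => ‖conj (m n) * ⟪Φ n, f⟫‖ ^ 2 := by
    simpa [inner_smul_left, mul_comm] using (hΦ.smul hm).summable f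
  obtain ⟨x, hx⟩ := hΨ.summable_smul hc
  convert hx
  refine ext_inner_left ℂ fun g => ?_
  have hgx : HasSum (fun n => conj (m n) * ⟪Φ n, f⟫ * ⟪g, Ψ n⟫) ⟪g, x⟫ := by
    simpa [inner_smul_right] using (innerSL ℂ g).hasSum hx
  have hfM : HasSum (fun n => m n * ⟪Ψ n, g⟫ * ⟪f, Φ n⟫) ⟪f, M g⟫ := by
    simpa [inner_smul_right] using (innerSL ℂ f).hasSum (hM g)
  have hMf : HasSum (fun n => conj (m n) * ⟪Φ n, f⟫ * ⟪g, Ψ n⟫) ⟪M g, f⟫ := by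
    rw [← inner_conj_symm]
    refine ((RCLike.hasSum_conj' ℂ).2 hfM).congr_fun fun n => ?_
    simp only [map_mul, inner_conj_symm]
    ring
  rw [ContinuousLinearMap.adjoint_inner_right, hgx.unique hMf]

lemma isDualFrame_adjoint_smul {N : E →L[ℂ] E} (hΦ : IsBessel Φ) (hΨ : IsBessel Ψ)
    (hm : ∀ n, ‖m n‖ ≤ b) (hM : ∀ f, HasSum (fun n => (m n * ⟪Ψ n, f⟫) • Φ n) (M f))
    (hMN : ∀ f, M (N f) = f) :
    IsDualFrame Φ fun n => (N†) (conj (m n) • Ψ n) := by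
  have hinner : ∀ n f, ⟪(N†) (conj (m n) • Ψ n), f⟫ = m n * ⟪Ψ n, N f⟫ := fun n f => by
    rw [ContinuousLinearMap.adjoint_inner_left, inner_smul_left, RCLike.conj_conj]
  have hNM : ∀ f, (N†) ((M†) f) = f := fun f => by
    rw [← ContinuousLinearMap.comp_apply, ← ContinuousLinearMap.adjoint_comp,
      show M ∘L N = .id ℂ E from ContinuousLinearMap.ext hMN, ContinuousLinearMap.adjoint_id,
      ContinuousLinearMap.id_apply]
  refine .of_isBessel hΦ ((hΨ.smul (by simpa using hm)).map (N†)) (fun f => ?_)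
    (fun f => ?_)
  · refine (hNM f ▸ (N†).hasSum (hasSum_adjoint_of_hasSum_multiplier hΦ hΨ hm hM f)).congr_fun
      fun n => ?_
    rw [map_smul, map_smul, smul_smul, mul_comm]
  · have h := hM (N f)
    rw [hMN] at h
    exact h.congr_fun fun n => by rw [hinner]

end Multiplier

section Uniqueness

variable {Φ Φd F : ℕ → E}

lemma IsDualFrame.add_smul_of_hasSum_eq_zero (hΦ : IsBessel Φ) (hd : IsDualFrame Φ Φd)
    {u : ℕ → ℂ} (hu : Summable fun n => ‖u n‖ ^ 2) (hu0 : HasSum (fun n => u n • Φ n) 0)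
    (w : E) : IsDualFrame Φ fun n => Φd n + conj (u n) • w := by
  have hconj : ∀ f, HasSum (fun n => ⟪Φ n, f⟫ * conj (u n)) 0 := fun f => by
    have hf : HasSum (fun n => u n * ⟪f, Φ n⟫) 0 := by
      simpa [inner_smul_right] using (innerSL ℂ f).hasSum hu0
    simpa [mul_comm] using (RCLike.hasSum_conj' ℂ).2 hf
  refine .of_isBessel hΦ (hd.1.isBessel.add (isBessel_smul_const (by simpa using hu) w))
    (fun f => ?_) (fun f => ?_)
  · have h := (hd.2 f).1.add ((hconj f).smul_const w)
    rw [zero_smul, add_zero] at h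
    refine h.congr_fun fun n => ?_
    rw [smul_add, mul_smul]
  · have h := (hd.2 f).2.add (hu0.const_smul ⟪w, f⟫)
    rw [smul_zero, add_zero] at h
    refine h.congr_fun fun n => ?_
    rw [inner_add_left, inner_smul_left, RCLike.conj_conj, add_smul, smul_smul, mul_comm]

variable {c : ℕ → ℂ} {T : E → E}

lemma hasSum_mul_smul_eq_zero_of_forall_isDualFrame (hΦ : IsBessel Φ) (hd : IsDualFrame Φ Φd)
    (hF : ∀ Φd, IsDualFrame Φ Φd → ∀ f, HasSum (fun n => (c n * ⟪Φd n, f⟫) • F n) (T f))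
    {u : ℕ → ℂ} (hu : Summable fun n => ‖u n‖ ^ 2) (hu0 : HasSum (fun n => u n • Φ n) 0) :
    HasSum (fun n => (c n * u n) • F n) 0 := by
  rcases subsingleton_or_nontrivial E with hE | hE
  · exact Subsingleton.elim (fun n => (c n * u n) • F n) 0 ▸ hasSum_zero
  obtain ⟨w, hw⟩ := exists_ne (0 : E)
  have hww : ⟪w, w⟫ ≠ 0 := inner_self_ne_zero.2 hw
  have h := ((hF _ (hd.add_smul_of_hasSum_eq_zero hΦ hu hu0 w) w).sub (hF Φd hd w)).const_smul
    ⟪w, w⟫⁻¹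
  rw [sub_self, smul_zero] at h
  refine h.congr_fun fun n => ?_
  rw [← sub_smul, smul_smul, inner_add_left, inner_smul_left, RCLike.conj_conj]
  congr 1
  field_simp
  ring

lemma smul_eq_of_forall_isDualFrame (hΦ : IsBessel Φ) (hd : IsDualFrame Φ Φd)
    (hF : ∀ Φd, IsDualFrame Φ Φd → ∀ f, HasSum (fun n => (c n * ⟪Φd n, f⟫) • F n) (T f))
    (k : ℕ) : c k • F k = T (Φ k) := by
  set δ : ℕ → ℂ := fun n => if n = k then 1 else 0
  have hδ : ∀ n ≠ k, δ n = 0 := fun n hn => if_neg hn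
  set u : ℕ → ℂ := fun n => δ n - ⟪Φd n, Φ k⟫
  have hu : Summable fun n => ‖u n‖ ^ 2 :=
    summable_sq_norm_sub (hasSum_single k fun n hn => by simp [hδ n hn]).summable
      (hd.1.isBessel.summable (Φ k))
  have hu0 : HasSum (fun n => u n • Φ n) 0 := by
    have h := (hasSum_single (f := fun n => δ n • Φ n) k fun n hn => by simp [hδ n hn]).sub
      (hd.2 (Φ k)).2
    simp only [δ, if_pos rfl, one_smul, sub_self] at h
    exact h.congr_fun fun n => sub_smul _ _ _
  have h := (hasSum_mul_smul_eq_zero_of_forall_isDualFrame hΦ hd hF hu hu0).add (hF Φd hd (Φ k))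
  rw [zero_add] at h
  have hk := hasSum_single (f := fun n => (c n * δ n) • F n) k fun n hn => by simp [hδ n hn]
  simp only [δ, if_pos rfl, mul_one] at hk
  exact hk.unique (h.congr_fun fun n => by rw [← add_smul, ← mul_add, sub_add_cancel])

end Uniqueness

lemma IsAPseudoDual.hasSum_inv_mul_smul_map {Φ Φd : ℕ → E} (hd : IsAPseudoDual Φ Φd)
    {m : ℕ → ℂ} (hm : ∀ n, m n ≠ 0) (T : E →L[ℂ] E) (f : E) :
    HasSum (fun n => ((m n)⁻¹ * ⟪Φd n, f⟫) • T (m n • Φ n)) (T f) :=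
  (T.hasSum (hd f)).congr_fun fun n => by
    rw [map_smul, map_smul, smul_smul, mul_comm _ (m n), ← mul_assoc, mul_inv_cancel₀ (hm n),
      one_mul]

theorem stmt2_general (Φ Ψ : ℕ → H) (m : ℕ → ℂ) (hΦ : IsFrame Φ) (hΨ : IsFrame Ψ)
    (hm : SemiNormalized m) (M N : H →L[ℂ] H)
    (hM : ∀ f : H, HasSum (fun n => (m n * ⟪Ψ n, f⟫) • Φ n) (M f))
    (hMN : ∀ f : H, M (N f) = f) :
    ∀ F : ℕ → H,
      (∀ Φd : ℕ → H, IsDualFrame Φ Φd → ∀ f : H,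
        HasSum (fun n => ((m n)⁻¹ * ⟪Φd n, f⟫) • F n) (N f))
      ↔ F = fun n => N (m n • Φ n) := by
  obtain ⟨a, b, ha, hab⟩ := hm
  have hm0 : ∀ n, m n ≠ 0 := fun n h => by simpa [h] using ha.trans_le (hab n).1
  have hd := isDualFrame_adjoint_smul hΦ.isBessel hΨ.isBessel (fun n => (hab n).2) hM hMN
  refine fun F => ⟨fun hF => funext fun k => ?_, ?_⟩
  · rw [map_smul, ← smul_eq_of_forall_isDualFrame hΦ.isBessel hd hF k, smul_inv_smul₀ (hm0 k)]
  · rintro rfl Φd hΦd f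
    exact hΦd.isAPseudoDual.hasSum_inv_mul_smul_map hm0 N f

theorem stmt2 (Φ Ψ : ℕ → H) (m : ℕ → ℂ) (hΦ : IsFrame Φ) (hΨ : IsFrame Ψ)
    (hm : SemiNormalized m) (M N : H →L[ℂ] H)
    (hM : ∀ f : H, HasSum (fun n => (m n * ⟪Ψ n, f⟫) • Φ n) (M f))
    (hNM : ∀ f : H, N (M f) = f) (hMN : ∀ f : H, M (N f) = f) :
    ∀ F : ℕ → H,
      (∀ Φd : ℕ → H, IsDualFrame Φ Φd → ∀ f : H,
        HasSum (fun n => ((m n)⁻¹ * ⟪Φd n, f⟫) • F n) (N f))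
      ↔ F = fun n => N (m n • Φ n) :=
  stmt2_general Φ Ψ m hΦ hΨ hm M N hM hMN
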